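/- Let p and q be primes with p ≡ 1 (mod 4), q ≡ 3 (mod 4), and q a nonsquare modulo p (Legendre symbol (q|p) = −1). Then the quaternion algebra ℍ[ℚ, −q·p, −p] is the definite quaternion algebra of discriminant p: for every prime ℓ, the localization ℍ[ℚ_ℓ, −qp, −p] is a division ring if and only if ℓ = p, and ℍ[ℝ, −qp, −p] is a division ring. -/

import Mathlib

/-!
An element of `ℍ[F, a, b]` is invertible iff its reduced norm
`x₀² - a x₁² - b x₂² + ab x₃²` is nonzero. For `a, b < 0` this form is positive definite.
Over `ℚ_p` with `a = -qp`, `b = -p` the norm is `N₁ + p N₂`, where `N₁, N₂` are values of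
`α² + qβ²`; since `-q` is a nonsquare mod `p`, `‖α² + qβ²‖ = max ‖α‖ ‖β‖ ^ 2` is an even power
of `p`, so `N₁ + p N₂ = 0` forces everything to vanish. At every prime `ℓ ≠ p` the conic
`x² = -qp y² - p z²` has a nonzero point, found by Hensel's lemma from a solution mod `ℓ`
(mod `8` for `ℓ = 2`; at `ℓ = q` it comes from `-p` being a square mod `q`, by quadratic
reciprocity), and `x + y i + z j` is then a nonzero element of norm zero.
-/

open Quaternion

namespace QuaternionAlgebra

variable {F : Type*} [Field F] {a b : F}

theorem re_self_mul_star (x : ℍ[F,a,b]) :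
    (x * star x).re = x.re ^ 2 - a * x.imI ^ 2 - b * x.imJ ^ 2 + a * b * x.imK ^ 2 := by
  simp only [re_mul, re_star, imI_star, imJ_star, imK_star]
  ring

theorem isUnit_iff_re_self_mul_star_ne_zero {x : ℍ[F,a,b]} :
    IsUnit x ↔ (x * star x).re ≠ 0 := by
  constructor
  · rintro hx h
    have : star x = 0 := by
      rw [← hx.mul_right_eq_zero, mul_star_eq_coe, h, coe_zero]
    exact not_isUnit_zero (star_eq_zero.mp this ▸ hx)
  · intro h
    set n := (x * star x).re
    refine ⟨⟨x, star x * ↑n⁻¹, ?_, ?_⟩, rfl⟩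
    · rw [← mul_assoc, mul_star_eq_coe, ← coe_mul, mul_inv_cancel₀ h, coe_one]
    · rw [mul_assoc, coe_commutes, ← mul_assoc, star_mul_eq_coe, star_comm_self', ← coe_mul,
        mul_inv_cancel₀ h, coe_one]

theorem not_forall_isUnit_of_sq_eq {x y z : F} (hne : (x, y, z) ≠ 0)
    (h : x ^ 2 = a * y ^ 2 + b * z ^ 2) : ¬∀ u : ℍ[F,a,b], u ≠ 0 → IsUnit u := by
  intro hdiv
  have hu : (⟨x, y, z, 0⟩ : ℍ[F,a,b]) ≠ 0 := by
    intro h0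
    simp_all [QuaternionAlgebra.ext_iff]
  have := isUnit_iff_re_self_mul_star_ne_zero.mp (hdiv _ hu)
  rw [re_self_mul_star] at this
  exact this (by linear_combination h)

theorem forall_isUnit_of_neg [LinearOrder F] [IsStrictOrderedRing F] (ha : a < 0) (hb : b < 0)
    (x : ℍ[F,a,b]) (hx : x ≠ 0) : IsUnit x := by
  rw [isUnit_iff_re_self_mul_star_ne_zero, re_self_mul_star]
  contrapose! hx
  have hre := sq_nonneg x.re
  have hI := mul_nonneg (neg_nonneg.2 ha.le) (sq_nonneg x.imI)
  have hJ := mul_nonneg (neg_nonneg.2 hb.le) (sq_nonneg x.imJ)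
  have hK := mul_nonneg (mul_pos_of_neg_of_neg ha hb).le (sq_nonneg x.imK)
  obtain ⟨h0, h1, h2, h3⟩ : x.re ^ 2 = 0 ∧ -a * x.imI ^ 2 = 0 ∧ -b * x.imJ ^ 2 = 0 ∧
      a * b * x.imK ^ 2 = 0 := by
    refine ⟨?_, ?_, ?_, ?_⟩ <;> linarith
  ext <;> simp_all [ha.ne, hb.ne]

end QuaternionAlgebra

open Polynomial in
theorem FiniteField.exists_mul_sq_add_mul_sq_eq {K : Type*} [Field K] [Fintype K]
    (hK : Fintype.card K % 2 = 1) {u v : K} (hu : u ≠ 0) (hv : v ≠ 0) (w : K) :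
    ∃ y z : K, u * y ^ 2 + v * z ^ 2 = w := by
  have hu2 : (C u * X ^ 2).degree = 2 := degree_C_mul_X_pow 2 hu
  obtain ⟨y, z, h⟩ := FiniteField.exists_root_sum_quadratic (f := C u * X ^ 2 - C w)
    (g := C v * X ^ 2) (by rw [degree_sub_C (by rw [hu2]; decide), hu2])
    (degree_C_mul_X_pow 2 hv) hK
  refine ⟨y, z, ?_⟩
  simp only [eval_sub, eval_mul, eval_C, eval_pow, eval_X] at h
  linear_combination h

namespace PadicInt

variable {p : ℕ} [Fact p.Prime]

theorem toZMod_eq_zero_iff_norm_lt_one (x : ℤ_[p]) : toZMod x = 0 ↔ ‖x‖ < 1 := by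
  rw [← RingHom.mem_ker, ker_toZMod, IsLocalRing.mem_maximalIdeal, mem_nonunits]

open Polynomial in
theorem isSquare_of_norm_sub_sq_lt {c r : ℤ_[p]} (h : ‖c - r ^ 2‖ < ‖2 * r‖ ^ 2) :
    IsSquare c := by
  have hF : ‖(X ^ 2 - C c).aeval r‖ < ‖(X ^ 2 - C c).derivative.aeval r‖ ^ 2 := by
    simpa [norm_sub_rev, one_add_one_eq_two] using h
  obtain ⟨s, hs, -⟩ := hensels_lemma hF
  simp only [map_sub, map_pow, aeval_X, aeval_C, Algebra.algebraMap_self, RingHom.id_apply] at hs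
  exact ⟨s, by linear_combination -hs⟩

theorem norm_sq_add_eq_one {c : ℤ} (hc : ¬IsSquare (-(c : ZMod p))) (t : ℤ_[p]) :
    ‖t ^ 2 + c‖ = 1 := by
  refine (norm_le_one _).antisymm (not_lt.mp fun h => hc ⟨toZMod t, ?_⟩)
  rw [← toZMod_eq_zero_iff_norm_lt_one, map_add, map_pow, map_intCast] at h
  linear_combination -h

end PadicInt

namespace Padic

variable {p : ℕ} [Fact p.Prime]

theorem isSquare_intCast_of_isSquare_zmod (hp : p ≠ 2) {c : ℤ} (hc0 : (c : ZMod p) ≠ 0)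
    (hc : IsSquare (c : ZMod p)) : IsSquare (c : ℚ_[p]) := by
  obtain ⟨m, hm⟩ := hc
  have hr : PadicInt.toZMod (m.val : ℤ_[p]) = m := by simp
  have hsub : ‖(c : ℤ_[p]) - (m.val : ℤ_[p]) ^ 2‖ < 1 := by
    rw [← PadicInt.toZMod_eq_zero_iff_norm_lt_one, map_sub, map_pow, hr, map_intCast, hm, sq,
      sub_self]
  have htwo : ‖2 * (m.val : ℤ_[p])‖ = 1 := by
    refine (PadicInt.norm_le_one _).lt_or_eq.resolve_left fun h => ?_
    rw [← PadicInt.toZMod_eq_zero_iff_norm_lt_one, map_mul, hr, map_ofNat] at h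
    have h2 : (2 : ZMod p) ≠ 0 := Ring.two_ne_zero (by rwa [ZMod.ringChar_zmod_n])
    exact mul_ne_zero h2 (by rintro rfl; simp_all) h
  obtain ⟨s, hs⟩ := PadicInt.isSquare_of_norm_sub_sq_lt (by rwa [htwo, one_pow])
  exact ⟨s, by simpa using congrArg ((↑) : ℤ_[p] → ℚ_[p]) hs⟩

theorem isSquare_intCast_of_emod_eight_eq_one {c : ℤ} (hc : c % 8 = 1) :
    IsSquare (c : ℚ_[2]) := by
  have hsub : ‖((c - 1 : ℤ) : ℤ_[2])‖ ≤ (2 : ℕ) ^ (-(3 : ℕ) : ℤ) :=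
    PadicInt.norm_int_le_pow_iff_dvd.mpr (by omega)
  obtain ⟨s, hs⟩ := PadicInt.isSquare_of_norm_sub_sq_lt (c := (c : ℤ_[2])) (r := 1) <| by
    have : ‖(2 : ℤ_[2])‖ = 2⁻¹ := by exact_mod_cast PadicInt.norm_p (p := 2)
    push_cast at hsub
    rw [mul_one, this, one_pow]
    exact hsub.trans_lt (by norm_num)
  exact ⟨s, by simpa using congrArg ((↑) : ℤ_[2] → ℚ_[2]) hs⟩

theorem norm_sq_add_eq_one {c : ℤ} (hc : ¬IsSquare (-(c : ZMod p))) {t : ℚ_[p]}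
    (ht : ‖t‖ ≤ 1) : ‖t ^ 2 + c‖ = 1 := by
  exact_mod_cast PadicInt.norm_sq_add_eq_one hc ⟨t, ht⟩

theorem norm_sq_add_mul_sq {c : ℤ} (hc : ¬IsSquare (-(c : ZMod p))) (α β : ℚ_[p]) :
    ‖α ^ 2 + c * β ^ 2‖ = max ‖α‖ ‖β‖ ^ 2 := by
  rcases le_or_gt ‖α‖ ‖β‖ with hle | hlt
  · rcases eq_or_ne β 0 with rfl | hβ
    · simp_all
    have hdiv : ‖α / β‖ ≤ 1 := by
      rw [norm_div]
      exact div_le_one_of_le₀ hle (norm_nonneg _)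
    calc ‖α ^ 2 + c * β ^ 2‖ = ‖β ^ 2 * ((α / β) ^ 2 + c)‖ := by
          congr 1
          field_simp
      _ = max ‖α‖ ‖β‖ ^ 2 := by
          rw [norm_mul, norm_pow, norm_sq_add_eq_one hc hdiv, mul_one, max_eq_right hle]
  · have hc1 : ‖(c : ℚ_[p])‖ = 1 := by simpa using norm_sq_add_eq_one hc (t := 0) (by simp)
    have hnorm : ‖c * β ^ 2‖ < ‖α ^ 2‖ := by
      rw [norm_mul, hc1, one_mul, norm_pow, norm_pow]
      gcongr
    rw [add_eq_max_of_ne hnorm.ne', max_eq_left hnorm.le, max_eq_left hlt.le, norm_pow]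

theorem norm_p_ne_norm_sq (x : ℚ_[p]) : ‖(p : ℚ_[p])‖ ≠ ‖x‖ ^ 2 := by
  have hp : (1 : ℝ) < p := by exact_mod_cast (Fact.out : p.Prime).one_lt
  rcases eq_or_ne x 0 with rfl | hx
  · simp [(Fact.out : p.Prime).ne_zero]
  rw [norm_p, norm_eq_zpow_neg_valuation hx, ← zpow_neg_one, ← zpow_natCast, ← zpow_mul]
  intro h
  have := zpow_right_injective₀ (zero_lt_one.trans hp) hp.ne' h
  omega

theorem eq_zero_of_sq_add_mul_sq_add_p_mul_eq_zero {c : ℤ} (hc : ¬IsSquare (-(c : ZMod p)))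
    {α β γ δ : ℚ_[p]} (h : α ^ 2 + c * β ^ 2 + p * (γ ^ 2 + c * δ ^ 2) = 0) :
    α = 0 ∧ β = 0 ∧ γ = 0 ∧ δ = 0 := by
  have hnorm : max ‖α‖ ‖β‖ ^ 2 = ‖(p : ℚ_[p])‖ * max ‖γ‖ ‖δ‖ ^ 2 := by
    rw [← norm_sq_add_mul_sq hc, ← norm_sq_add_mul_sq hc, ← norm_mul,
      eq_neg_of_add_eq_zero_left h, norm_neg]
  have hγδ : max ‖γ‖ ‖δ‖ = 0 := by
    by_contra hne
    obtain ⟨μ, hμ⟩ : ∃ μ, max ‖α‖ ‖β‖ = ‖μ‖ := (max_choice ‖α‖ ‖β‖).elim (⟨α, ·⟩) (⟨β, ·⟩)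
    obtain ⟨ν, hν⟩ : ∃ ν, max ‖γ‖ ‖δ‖ = ‖ν‖ := (max_choice ‖γ‖ ‖δ‖).elim (⟨γ, ·⟩) (⟨δ, ·⟩)
    apply norm_p_ne_norm_sq (μ / ν)
    rw [norm_div, div_pow, ← hμ, ← hν, hnorm, mul_div_cancel_right₀ _ (pow_ne_zero _ hne)]
  have hαβ : max ‖α‖ ‖β‖ = 0 := by simpa [hγδ] using hnorm
  simp only [le_antisymm_iff, max_le_iff, norm_le_zero_iff] at hαβ hγδ
  exact ⟨hαβ.1.1, hαβ.1.2, hγδ.1.1, hγδ.1.2⟩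

theorem forall_isUnit_quaternionAlgebra {c : ℤ} (hc : ¬IsSquare (-(c : ZMod p)))
    (x : ℍ[ℚ_[p], -(c * p), -p]) (hx : x ≠ 0) : IsUnit x := by
  rw [QuaternionAlgebra.isUnit_iff_re_self_mul_star_ne_zero, QuaternionAlgebra.re_self_mul_star]
  contrapose! hx
  obtain ⟨hre, hK, hJ, hI⟩ := eq_zero_of_sq_add_mul_sq_add_p_mul_eq_zero hc
    (α := x.re) (β := p * x.imK) (γ := x.imJ) (δ := x.imI) (by linear_combination hx)
  have hp : (p : ℚ_[p]) ≠ 0 := by exact_mod_cast (Fact.out : p.Prime).ne_zero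
  ext <;> simp_all

theorem exists_isotropic_of_ne_two (hp : p ≠ 2) {a b : ℤ} (ha : (a : ZMod p) ≠ 0)
    (hb : (b : ZMod p) ≠ 0) : ∃ x y z : ℚ_[p], (x, y, z) ≠ 0 ∧ x ^ 2 = a * y ^ 2 + b * z ^ 2 := by
  obtain ⟨y, z, hyz⟩ := FiniteField.exists_mul_sq_add_mul_sq_eq
    (by rwa [ZMod.card, Nat.Prime.mod_two_eq_one_iff_ne_two Fact.out]) ha hb 1
  set t : ℤ := a * y.val ^ 2 + b * z.val ^ 2
  have ht : (t : ZMod p) = 1 := by simpa [t] using hyz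
  obtain ⟨s, hs⟩ := isSquare_intCast_of_isSquare_zmod hp (c := t) (by simp [ht]) (by simp [ht])
  refine ⟨s, y.val, z.val, ?_, ?_⟩
  · intro h0
    have : (t : ℚ_[p]) = 0 := by rw [hs, (Prod.mk_eq_zero.mp h0).1, mul_zero]
    simp_all
  · push_cast [t] at hs
    linear_combination -hs

theorem exists_isotropic_two {a b : ℤ} (ha : a % 4 = 1) (hb : b % 2 = 1) :
    ∃ x y z : ℚ_[2], (x, y, z) ≠ 0 ∧ x ^ 2 = a * y ^ 2 + b * z ^ 2 := by
  rcases (by omega : a % 8 = 1 ∨ (a + 4 * b) % 8 = 1) with h | h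
  · obtain ⟨s, hs⟩ := isSquare_intCast_of_emod_eight_eq_one h
    refine ⟨s, 1, 0, by simp, ?_⟩
    linear_combination -hs
  · obtain ⟨s, hs⟩ := isSquare_intCast_of_emod_eight_eq_one h
    refine ⟨s, 1, 2, by simp, ?_⟩
    push_cast at hs
    linear_combination -hs

end Padic

theorem exists_isotropic_neg_mul_neg {p q ℓ : ℕ} [Fact p.Prime] [Fact q.Prime] [Fact ℓ.Prime]
    (hp4 : p % 4 = 1) (hq4 : q % 4 = 3) (hsq : IsSquare (-((p : ℤ) : ZMod q))) (hℓ : ℓ ≠ p) :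
    ∃ x y z : ℚ_[ℓ], (x, y, z) ≠ 0 ∧
      x ^ 2 = -((q : ℚ_[ℓ]) * (p : ℚ_[ℓ])) * y ^ 2 + -(p : ℚ_[ℓ]) * z ^ 2 := by
  have hqp : q * p % 4 = 3 := by rw [Nat.mul_mod, hp4, hq4]
  rcases eq_or_ne ℓ 2 with rfl | hℓ2
  · obtain ⟨x, y, z, hne, h⟩ :=
      Padic.exists_isotropic_two (a := -(q * p)) (b := -p) (by omega) (by omega)
    exact ⟨x, y, z, hne, by push_cast at h; exact h⟩
  have hpℓ : (p : ZMod ℓ) ≠ 0 := ZMod.prime_ne_zero ℓ p hℓ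
  rcases eq_or_ne ℓ q with rfl | hℓq
  · obtain ⟨s, hs⟩ :=
      Padic.isSquare_intCast_of_isSquare_zmod hℓ2 (c := -p) (by simpa) (by simpa using hsq)
    refine ⟨s, 0, 1, by simp, ?_⟩
    push_cast at hs
    linear_combination -hs
  · have hqℓ : (q : ZMod ℓ) ≠ 0 := ZMod.prime_ne_zero ℓ q hℓq
    obtain ⟨x, y, z, hne, h⟩ := Padic.exists_isotropic_of_ne_two hℓ2 (a := -(q * p)) (b := -p)
      (by simpa using mul_ne_zero hqℓ hpℓ) (by simpa)
    exact ⟨x, y, z, hne, by push_cast at h; exact h⟩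

/-- For primes `p ≡ 1 (mod 4)`, `q ≡ 3 (mod 4)` with `q` a nonsquare mod `p`, the
quaternion algebra `ℍ[ℚ, -q·p, -p]` is the definite quaternion algebra of
discriminant `p`: it is division exactly at `ℝ` and at the prime `p`. -/
theorem quaternionAlgebra_neg_qp_neg_p_discriminant
    (p q : ℕ) [Fact p.Prime] [Fact q.Prime]
    (hp4 : p % 4 = 1) (hq4 : q % 4 = 3) (hleg : legendreSym p q = -1) :
    (∀ (ℓ : ℕ) [Fact ℓ.Prime],
      ((∀ x : ℍ[ℚ_[ℓ], (-((q : ℚ_[ℓ]) * (p : ℚ_[ℓ]))), (-(p : ℚ_[ℓ]))],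
          x ≠ 0 → IsUnit x) ↔ ℓ = p)) ∧
    (∀ x : ℍ[ℝ, (-((q : ℝ) * (p : ℝ))), (-(p : ℝ))], x ≠ 0 → IsUnit x) := by
  have hnsq : ¬IsSquare (-((q : ℤ) : ZMod p)) := by
    rw [← Int.cast_neg, ← legendreSym.eq_neg_one_iff, legendreSym.at_neg (by omega),
      ZMod.χ₄_nat_one_mod_four hp4, hleg, one_mul]
  have hsq : IsSquare (-((p : ℤ) : ZMod q)) := by
    have hp0 : ((-p : ℤ) : ZMod q) ≠ 0 := by simpa using ZMod.prime_ne_zero q p (by omega)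
    rw [← Int.cast_neg, ← legendreSym.eq_one_iff q hp0, legendreSym.at_neg (by omega),
      ZMod.χ₄_nat_three_mod_four hq4,
      legendreSym.quadratic_reciprocity_one_mod_four hp4 (by omega), hleg]
    norm_num
  have hp : (0 : ℝ) < p := by exact_mod_cast (Fact.out : p.Prime).pos
  have hq : (0 : ℝ) < q := by exact_mod_cast (Fact.out : q.Prime).pos
  refine ⟨fun ℓ _ => ⟨fun hdiv => ?_, ?_⟩,
    QuaternionAlgebra.forall_isUnit_of_neg (by simp [mul_pos hq hp]) (by simp [hp])⟩
  · by_contra hℓ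
    obtain ⟨x, y, z, hne, h⟩ := exists_isotropic_neg_mul_neg hp4 hq4 hsq hℓ
    exact QuaternionAlgebra.not_forall_isUnit_of_sq_eq hne h hdiv
  · rintro rfl
    exact_mod_cast Padic.forall_isUnit_quaternionAlgebra hnsq
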